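/- arXiv:1312.6926 — 2 statements merged into one kernel-verified Lean document; each statement's English description precedes it below -/
import Mathlib

section
/- Let A and B be m×k complex matrices. Then the Lévy distance between the empirical spectral distributions of AA* and BB* satisfies L(F^{AA*}, F^{BB*}) ≤ 2‖A‖₂·‖A - B‖₂ + ‖A - B‖₂², where ‖·‖₂ is the operator norm. -/
/-!
Put `δ = 2‖A‖‖A - B‖ + ‖A - B‖²`, which bounds `‖AA* - BB*‖`. For Hermitian `M`, `N` with
`‖M - N‖ ≤ δ`, the span of the eigenvectors of `N` with eigenvalue `≤ x` meets the span of the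
eigenvectors of `M` with eigenvalue `> x + δ` only in `0`: on the first `re ⟪v, N v⟫ ≤ x‖v‖²`, on
the second `re ⟪v, M v⟫ > (x + δ)‖v‖²` unless `v = 0`, and `|⟪v, (M - N) v⟫| ≤ δ‖v‖²`.
Counting dimensions gives `F^N(x) ≤ F^M(x + δ)`; applied both ways, each ESD lies below the
other shifted by `δ`, which bounds the Lévy distance by `δ`.
-/

open Matrix
open scoped Matrix.Norms.L2Operator

/-- The empirical spectral distribution of an `m × m` Hermitian complex matrix. -/
noncomputable def ESD {m : ℕ} {M : Matrix (Fin m) (Fin m) ℂ}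
    (hM : M.IsHermitian) (x : ℝ) : ℝ :=
  (Finset.univ.filter fun j => hM.eigenvalues j ≤ x).card / m

/-- The Lévy distance between two functions `F, G : ℝ → ℝ`. -/
noncomputable def levyDist (F G : ℝ → ℝ) : ℝ :=
  sInf {ε : ℝ | 0 < ε ∧ ∀ x, F (x - ε) - ε ≤ G x ∧ G x ≤ F (x + ε) + ε}

open Module Submodule
open scoped InnerProductSpace

namespace OrthonormalBasis

variable {ι 𝕜 E : Type*} [RCLike 𝕜] [NormedAddCommGroup E] [InnerProductSpace 𝕜 E] [Fintype ι]

lemma inner_eq_zero_of_mem_span_image (b : OrthonormalBasis ι 𝕜 E) {S : Set ι} {v : E}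
    (hv : v ∈ span 𝕜 (b '' S)) {j : ι} (hj : j ∉ S) : ⟪b j, v⟫_𝕜 = 0 := by
  refine (span_le.2 ?_ hv : v ∈ LinearMap.ker (innerₛₗ 𝕜 (b j)))
  rintro _ ⟨i, hi, rfl⟩
  exact b.inner_eq_zero (ne_of_mem_of_not_mem hi hj).symm

lemma finrank_span_image (b : OrthonormalBasis ι 𝕜 E) (S : Finset ι) :
    finrank 𝕜 (span 𝕜 (b '' S)) = S.card := by
  have h := finrank_span_eq_card
    (b.orthonormal.linearIndependent.comp (Subtype.val : ↥(S : Set ι) → ι) Subtype.val_injective)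
  rw [Set.image_eq_range]
  exact h.trans (Fintype.card_coe S)

end OrthonormalBasis

namespace Matrix

variable {𝕜 n : Type*} [RCLike 𝕜] [Fintype n] [DecidableEq n]

lemma re_inner_toEuclideanLin_le (A : Matrix n n 𝕜) (v : EuclideanSpace 𝕜 n) :
    RCLike.re ⟪v, toEuclideanLin A v⟫_𝕜 ≤ ‖A‖ * ‖v‖ ^ 2 :=
  calc RCLike.re ⟪v, toEuclideanLin A v⟫_𝕜
      ≤ ‖v‖ * ‖toEuclideanLin A v‖ := (RCLike.re_le_norm _).trans (norm_inner_le_norm _ _)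
    _ ≤ ‖v‖ * (‖A‖ * ‖v‖) := by gcongr; exact A.l2_opNorm_mulVec v
    _ = ‖A‖ * ‖v‖ ^ 2 := by ring

namespace IsHermitian

variable {M : Matrix n n 𝕜} (hM : M.IsHermitian)

lemma toEuclideanLin_eigenvectorBasis (j : n) :
    toEuclideanLin M (hM.eigenvectorBasis j) =
      (hM.eigenvalues j : 𝕜) • hM.eigenvectorBasis j := by
  apply (WithLp.equiv 2 _).injective
  have h := hM.mulVec_eigenvectorBasis j
  rw [RCLike.real_smul_eq_coe_smul (K := 𝕜)] at h
  exact h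

lemma inner_eigenvectorBasis_toEuclideanLin (v : EuclideanSpace 𝕜 n) (j : n) :
    ⟪hM.eigenvectorBasis j, toEuclideanLin M v⟫_𝕜 =
      hM.eigenvalues j * ⟪hM.eigenvectorBasis j, v⟫_𝕜 := by
  rw [← isSymmetric_toEuclideanLin_iff.2 hM, toEuclideanLin_eigenvectorBasis, inner_smul_left,
    RCLike.conj_ofReal]

lemma re_inner_toEuclideanLin_eq_sum (v : EuclideanSpace 𝕜 n) :
    RCLike.re ⟪v, toEuclideanLin M v⟫_𝕜 =
      ∑ j, hM.eigenvalues j * ‖⟪hM.eigenvectorBasis j, v⟫_𝕜‖ ^ 2 := by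
  rw [← hM.eigenvectorBasis.sum_inner_mul_inner, map_sum]
  refine Finset.sum_congr rfl fun j _ => ?_
  rw [inner_eigenvectorBasis_toEuclideanLin, ← inner_conj_symm, mul_left_comm, RCLike.conj_mul]
  norm_cast

variable {S : Set n} {c : ℝ} {v : EuclideanSpace 𝕜 n}

lemma re_inner_toEuclideanLin_le_of_mem_span (hS : ∀ j ∈ S, hM.eigenvalues j ≤ c)
    (hv : v ∈ span 𝕜 (hM.eigenvectorBasis '' S)) :
    RCLike.re ⟪v, toEuclideanLin M v⟫_𝕜 ≤ c * ‖v‖ ^ 2 := by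
  rw [re_inner_toEuclideanLin_eq_sum, ← hM.eigenvectorBasis.sum_sq_norm_inner_right,
    Finset.mul_sum]
  refine Finset.sum_le_sum fun j _ => ?_
  by_cases hj : j ∈ S
  · exact mul_le_mul_of_nonneg_right (hS j hj) (sq_nonneg _)
  · simp [hM.eigenvectorBasis.inner_eq_zero_of_mem_span_image hv hj]

lemma lt_re_inner_toEuclideanLin_of_mem_span (hS : ∀ j ∈ S, c < hM.eigenvalues j)
    (hv : v ∈ span 𝕜 (hM.eigenvectorBasis '' S)) (hv₀ : v ≠ 0) :
    c * ‖v‖ ^ 2 < RCLike.re ⟪v, toEuclideanLin M v⟫_𝕜 := by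
  have hsum := hM.eigenvectorBasis.sum_sq_norm_inner_right v
  obtain ⟨j₀, -, hj₀⟩ := Finset.exists_ne_zero_of_sum_ne_zero
    (hsum.trans_ne (pow_ne_zero 2 (norm_ne_zero_iff.2 hv₀)))
  have hj₀S : j₀ ∈ S := by
    by_contra hj
    simp [hM.eigenvectorBasis.inner_eq_zero_of_mem_span_image hv hj] at hj₀
  rw [re_inner_toEuclideanLin_eq_sum, ← hsum, Finset.mul_sum]
  refine Finset.sum_lt_sum (fun j _ => ?_) ⟨j₀, Finset.mem_univ _, ?_⟩
  · by_cases hj : j ∈ S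
    · exact mul_le_mul_of_nonneg_right (hS j hj).le (sq_nonneg _)
    · simp [hM.eigenvectorBasis.inner_eq_zero_of_mem_span_image hv hj]
  · exact mul_lt_mul_of_pos_right (hS j₀ hj₀S) (lt_of_le_of_ne (sq_nonneg _) (Ne.symm hj₀))

variable {N : Matrix n n 𝕜} {δ : ℝ}

lemma disjoint_span_eigenvectorBasis (hN : N.IsHermitian)
    (hMN : ‖M - N‖ ≤ δ) (x : ℝ) :
    Disjoint (span 𝕜 (hN.eigenvectorBasis '' {j | hN.eigenvalues j ≤ x}))
      (span 𝕜 (hM.eigenvectorBasis '' {j | x + δ < hM.eigenvalues j})) := by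
  refine Submodule.disjoint_def.2 fun v hvN hvM => by_contra fun hv₀ => ?_
  have hN_le := hN.re_inner_toEuclideanLin_le_of_mem_span (fun _ hj => hj) hvN
  have hM_gt := hM.lt_re_inner_toEuclideanLin_of_mem_span (fun _ hj => hj) hvM hv₀
  have hMN_le := re_inner_toEuclideanLin_le (M - N) v
  rw [map_sub, LinearMap.sub_apply, inner_sub_right, map_sub] at hMN_le
  nlinarith [mul_le_mul_of_nonneg_right hMN (sq_nonneg ‖v‖)]

lemma card_filter_eigenvalues_le_le_of_norm_sub_le (hN : N.IsHermitian)
    (hMN : ‖M - N‖ ≤ δ) (x : ℝ) :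
    (Finset.univ.filter fun j => hN.eigenvalues j ≤ x).card ≤
      (Finset.univ.filter fun j => hM.eigenvalues j ≤ x + δ).card := by
  have hdim := Submodule.finrank_add_finrank_le_of_disjoint
    (hM.disjoint_span_eigenvectorBasis hN hMN x)
  have hcompl := Finset.card_filter_add_card_filter_not (s := Finset.univ)
    (fun j => hM.eigenvalues j ≤ x + δ)
  simp only [not_le] at hcompl
  rw [← Finset.coe_filter_univ, ← Finset.coe_filter_univ, hN.eigenvectorBasis.finrank_span_image,
    hM.eigenvectorBasis.finrank_span_image, finrank_euclideanSpace] at hdim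
  simp only [Finset.card_univ] at hcompl
  omega

end IsHermitian

end Matrix

lemma ESD_mono {m : ℕ} {M : Matrix (Fin m) (Fin m) ℂ} (hM : M.IsHermitian) : Monotone (ESD hM) :=
  fun _ _ hxy => div_le_div_of_nonneg_right (Nat.cast_le.2 (Finset.card_le_card
    (Finset.monotone_filter_right _ fun _ _ hj => hj.trans hxy))) (Nat.cast_nonneg m)

lemma ESD_le_ESD_add_of_norm_sub_le {m : ℕ} {M N : Matrix (Fin m) (Fin m) ℂ}
    (hM : M.IsHermitian) (hN : N.IsHermitian) {δ : ℝ} (hMN : ‖M - N‖ ≤ δ) (x : ℝ) :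
    ESD hN x ≤ ESD hM (x + δ) :=
  div_le_div_of_nonneg_right
    (Nat.cast_le.2 (hM.card_filter_eigenvalues_le_le_of_norm_sub_le hN hMN x)) (Nat.cast_nonneg m)

lemma levyDist_le_of_le_shift {F G : ℝ → ℝ} (hF : Monotone F) (hG : Monotone G) {δ : ℝ}
    (hδ : 0 ≤ δ) (hFG : ∀ x, F x ≤ G (x + δ)) (hGF : ∀ x, G x ≤ F (x + δ)) :
    levyDist F G ≤ δ := by
  refine le_of_forall_gt_imp_ge_of_dense fun ε hε =>
    csInf_le ⟨0, fun _ h => h.1.le⟩ ⟨hδ.trans_lt hε, fun x => ⟨?_, ?_⟩⟩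
  · linarith [hFG (x - ε), hG (show x - ε + δ ≤ x by linarith)]
  · linarith [hGF x, hF (show x + δ ≤ x + ε by linarith)]

lemma norm_mul_conjTranspose_sub_le {𝕜 m k : Type*} [RCLike 𝕜] [Fintype m] [Fintype k]
    [DecidableEq m] [DecidableEq k] (A B : Matrix m k 𝕜) :
    ‖A * Aᴴ - B * Bᴴ‖ ≤ 2 * ‖A‖ * ‖A - B‖ + ‖A - B‖ ^ 2 := by
  have hid : A * Aᴴ - B * Bᴴ = A * (A - B)ᴴ + (A - B) * Aᴴ - (A - B) * (A - B)ᴴ := by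
    simp only [conjTranspose_sub, Matrix.mul_sub, Matrix.sub_mul]
    abel
  calc ‖A * Aᴴ - B * Bᴴ‖
      ≤ ‖A * (A - B)ᴴ‖ + ‖(A - B) * Aᴴ‖ + ‖(A - B) * (A - B)ᴴ‖ := by
        rw [hid]; exact (norm_sub_le _ _).trans (by gcongr; exact norm_add_le _ _)
    _ ≤ ‖A‖ * ‖(A - B)ᴴ‖ + ‖A - B‖ * ‖Aᴴ‖ + ‖A - B‖ * ‖(A - B)ᴴ‖ := by
        gcongr <;> exact l2_opNorm_mul _ _
    _ = 2 * ‖A‖ * ‖A - B‖ + ‖A - B‖ ^ 2 := by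
        rw [l2_opNorm_conjTranspose, l2_opNorm_conjTranspose]; ring

/-- For `m × k` complex matrices `A`, `B`, the Lévy distance between the ESDs of
`AA*` and `BB*` satisfies `L(F^{AA*}, F^{BB*}) ≤ 2‖A‖₂‖A-B‖₂ + ‖A-B‖₂²`,
where `‖·‖₂` is the operator norm. -/
theorem levy_esd_mul_conjTranspose_le {m k : ℕ} (A B : Matrix (Fin m) (Fin k) ℂ) :
    levyDist (ESD (isHermitian_mul_conjTranspose_self A))
        (ESD (isHermitian_mul_conjTranspose_self B)) ≤
      2 * ‖A‖ * ‖A - B‖ + ‖A - B‖ ^ 2 := by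
  have hAB := norm_mul_conjTranspose_sub_le A B
  have hBA : ‖B * Bᴴ - A * Aᴴ‖ ≤ 2 * ‖A‖ * ‖A - B‖ + ‖A - B‖ ^ 2 := by rwa [norm_sub_rev]
  exact levyDist_le_of_le_shift (ESD_mono _) (ESD_mono _) (by positivity)
    (ESD_le_ESD_add_of_norm_sub_le _ _ hBA) (ESD_le_ESD_add_of_norm_sub_le _ _ hAB)
end

section
/- For the Marčenko–Pastur law F_y with 0 < y ≤ 1 and a = (1-√y)², the function g(v) = 2v/(y(√a + √v)) is a modulus of continuity: sup_x |F_y(x + θ) - F_y(x)| ≤ 2θ/(y(√a + √θ)) for all θ > 0. -/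
/-!
Write `a = (1 - √y)²` and `b = (1 + √y)²`. On `[a, b]` we have `b - t ≤ b - a = 4√y`, so the
density is at most `y^{1/4} / (π y) · √(t - a) / t`. If `θ ≤ a`, AM-GM `2 √a √(t - a) ≤ t` bounds
the density by the constant `y^{1/4} / (2π y √a)`, and an interval of length `θ` carries mass at
most `θ / (2π y √a) ≤ 2θ / (y (√a + √θ))`. If `a < θ`, we use `√(t - a) / t ≤ 1 / √(t - a)`,
whose integral over an interval of length `θ` is at most `2√θ`; the mass is then at most
`2√θ / (π y) ≤ 2θ / (y (√a + √θ))`.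
-/

open MeasureTheory

/-- The density of the Marčenko–Pastur law with ratio index `y` (σ² = 1). -/
noncomputable def mpDensity (y x : ℝ) : ℝ :=
  if (1 - Real.sqrt y) ^ 2 ≤ x ∧ x ≤ (1 + Real.sqrt y) ^ 2 then
    Real.sqrt (((1 + Real.sqrt y) ^ 2 - x) * (x - (1 - Real.sqrt y) ^ 2)) /
      (2 * Real.pi * x * y)
  else 0

/-- The distribution function of the Marčenko–Pastur law with index `y ≤ 1`. -/
noncomputable def mpCdf (y x : ℝ) : ℝ := ∫ t in Set.Iic x, mpDensity y t

open Set Real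

/-- Holds for every `r`: for `r < 0` both sides are `0`. -/
lemma inv_sqrt_eq_rpow_neg_half (r : ℝ) : (√r)⁻¹ = r ^ (-(1 / 2) : ℝ) := by
  rw [rpow_neg_eq_inv_rpow, ← sqrt_eq_rpow, sqrt_inv]

lemma intervalIntegrable_inv_sqrt_sub (a x x' : ℝ) :
    IntervalIntegrable (fun t => (√(t - a))⁻¹) volume x x' := by
  simp_rw [inv_sqrt_eq_rpow_neg_half]
  simpa using ((intervalIntegral.intervalIntegrable_rpow' (r := -(1 / 2)) (by norm_num)
    (a := x - a) (b := x' - a)).comp_sub_right a)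

lemma integral_inv_sqrt_sub (a x x' : ℝ) :
    ∫ t in x..x', (√(t - a))⁻¹ = 2 * (√(x' - a) - √(x - a)) := by
  simp_rw [inv_sqrt_eq_rpow_neg_half]
  rw [intervalIntegral.integral_comp_sub_right (fun r => r ^ (-(1 / 2) : ℝ)),
    integral_rpow (Or.inl (by norm_num)), sqrt_eq_rpow, sqrt_eq_rpow]
  norm_num
  ring

lemma sqrt_add_sub_sqrt_le (p : ℝ) {θ : ℝ} (hθ : 0 ≤ θ) : √(p + θ) - √p ≤ √θ := by
  rcases lt_or_ge p 0 with hp | hp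
  · rw [sqrt_eq_zero'.2 hp.le, sub_zero]
    exact sqrt_le_sqrt (by linarith)
  · rw [sub_le_iff_le_add, sqrt_le_iff]
    refine ⟨by positivity, ?_⟩
    nlinarith [sq_sqrt hp, sq_sqrt hθ, mul_nonneg (sqrt_nonneg p) (sqrt_nonneg θ)]

lemma sqrt_sub_div_le_inv_sqrt_sub {a : ℝ} (ha : 0 ≤ a) (t : ℝ) :
    √(t - a) / t ≤ (√(t - a))⁻¹ := by
  rcases le_or_gt t a with hta | hta
  · simp [sqrt_eq_zero'.2 (sub_nonpos.2 hta)]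
  · have hr : 0 < √(t - a) := sqrt_pos.2 (sub_pos.2 hta)
    rw [div_le_iff₀ (by linarith), inv_mul_eq_div, le_div_iff₀ hr, mul_self_sqrt (by linarith)]
    linarith

lemma sqrt_sub_div_le_inv_two_sqrt {a : ℝ} (ha : 0 < a) (t : ℝ) :
    √(t - a) / t ≤ (2 * √a)⁻¹ := by
  rcases le_or_gt t a with hta | hta
  · simp [sqrt_eq_zero'.2 (sub_nonpos.2 hta)]
  · have hr := sq_sqrt (sub_pos.2 hta).le
    rw [div_le_iff₀ (by linarith), inv_mul_eq_div, le_div_iff₀ (by positivity)]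
    -- AM-GM: `2 √a √(t - a) ≤ a + (t - a)`
    nlinarith [sq_nonneg (√a - √(t - a)), sq_sqrt ha.le]

section MarchenkoPastur

variable {y : ℝ}

lemma mpDensity_nonneg (hy : 0 ≤ y) (t : ℝ) : 0 ≤ mpDensity y t := by
  unfold mpDensity
  split_ifs with h
  · have : 0 ≤ t := (sq_nonneg _).trans h.1
    positivity
  · exact le_rfl

lemma measurable_mpDensity (y : ℝ) : Measurable (mpDensity y) :=
  Measurable.ite measurableSet_Icc (by fun_prop) measurable_const

lemma support_mpDensity_subset (y : ℝ) :
    Function.support (mpDensity y) ⊆ Icc ((1 - √y) ^ 2) ((1 + √y) ^ 2) := by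
  intro t ht
  by_contra hmem
  exact ht (if_neg (fun h => hmem h))

lemma sqrt_one_add_sqrt_sq_sub_le {t : ℝ} (ht : (1 - √y) ^ 2 ≤ t) :
    √((1 + √y) ^ 2 - t) ≤ 2 * √√y := by
  rw [sqrt_le_iff]
  refine ⟨by positivity, ?_⟩
  rw [mul_pow, sq_sqrt (sqrt_nonneg y)]
  linarith

lemma mpDensity_le (hy : 0 ≤ y) (t : ℝ) :
    mpDensity y t ≤ √√y / (π * y) * (√(t - (1 - √y) ^ 2) / t) := by
  unfold mpDensity
  split_ifs with h
  · calc √(((1 + √y) ^ 2 - t) * (t - (1 - √y) ^ 2)) / (2 * π * t * y)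
        = √((1 + √y) ^ 2 - t) * √(t - (1 - √y) ^ 2) / (2 * π * t * y) := by
          rw [sqrt_mul (sub_nonneg.2 h.2)]
      _ ≤ 2 * √√y * √(t - (1 - √y) ^ 2) / (2 * π * t * y) := by
          have : 0 ≤ t := (sq_nonneg _).trans h.1
          gcongr
          exact sqrt_one_add_sqrt_sq_sub_le h.1
      _ = √√y / (π * y) * (√(t - (1 - √y) ^ 2) / t) := by ring
  · rcases le_or_gt t ((1 - √y) ^ 2) with hta | hta
    · simp [sqrt_eq_zero'.2 (sub_nonpos.2 hta)]
    · have : 0 < t := (sq_nonneg _).trans_lt hta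
      positivity

lemma mpDensity_le_inv_sqrt (hy : 0 ≤ y) (t : ℝ) :
    mpDensity y t ≤ √√y / (π * y) * (√(t - (1 - √y) ^ 2))⁻¹ :=
  (mpDensity_le hy t).trans (by gcongr; exact sqrt_sub_div_le_inv_sqrt_sub (sq_nonneg _) t)

lemma mpDensity_le_of_pos (hy : 0 ≤ y) (ha : 0 < (1 - √y) ^ 2) (t : ℝ) :
    mpDensity y t ≤ √√y / (π * y) * (2 * √((1 - √y) ^ 2))⁻¹ :=
  (mpDensity_le hy t).trans (by gcongr; exact sqrt_sub_div_le_inv_two_sqrt ha t)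

lemma integrable_mpDensity (hy : 0 ≤ y) : Integrable (mpDensity y) := by
  have hab : (1 - √y) ^ 2 ≤ (1 + √y) ^ 2 := by nlinarith [sqrt_nonneg y]
  rw [← integrableOn_iff_integrable_of_support_subset (support_mpDensity_subset y)]
  refine Integrable.mono' ((intervalIntegrable_iff_integrableOn_Icc_of_le hab).1
      ((intervalIntegrable_inv_sqrt_sub ((1 - √y) ^ 2) _ _).const_mul (√√y / (π * y))))
    (measurable_mpDensity y).aestronglyMeasurable (Filter.Eventually.of_forall fun t => ?_)
  rw [norm_of_nonneg (mpDensity_nonneg hy t)]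
  exact mpDensity_le_inv_sqrt hy t

lemma mpCdf_sub_mpCdf (hy : 0 ≤ y) (x x' : ℝ) :
    mpCdf y x' - mpCdf y x = ∫ t in x..x', mpDensity y t :=
  intervalIntegral.integral_Iic_sub_Iic (integrable_mpDensity hy).integrableOn
    (integrable_mpDensity hy).integrableOn

lemma integral_mpDensity_le_of_pos (hy : 0 ≤ y) (ha : 0 < (1 - √y) ^ 2) (x : ℝ) {θ : ℝ}
    (hθ : 0 ≤ θ) :
    ∫ t in x..x + θ, mpDensity y t ≤ θ * (√√y / (π * y) * (2 * √((1 - √y) ^ 2))⁻¹) := by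
  calc ∫ t in x..x + θ, mpDensity y t
      ≤ ∫ _ in x..x + θ, √√y / (π * y) * (2 * √((1 - √y) ^ 2))⁻¹ :=
        intervalIntegral.integral_mono_on (by linarith)
          (integrable_mpDensity hy).intervalIntegrable intervalIntegrable_const
          fun t _ => mpDensity_le_of_pos hy ha t
    _ = θ * (√√y / (π * y) * (2 * √((1 - √y) ^ 2))⁻¹) := by
        rw [intervalIntegral.integral_const, smul_eq_mul, add_sub_cancel_left]

lemma integral_mpDensity_le_sqrt (hy : 0 ≤ y) (x : ℝ) {θ : ℝ} (hθ : 0 ≤ θ) :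
    ∫ t in x..x + θ, mpDensity y t ≤ √√y / (π * y) * (2 * √θ) := by
  calc ∫ t in x..x + θ, mpDensity y t
      ≤ ∫ t in x..x + θ, √√y / (π * y) * (√(t - (1 - √y) ^ 2))⁻¹ :=
        intervalIntegral.integral_mono_on (by linarith)
          (integrable_mpDensity hy).intervalIntegrable
          ((intervalIntegrable_inv_sqrt_sub _ _ _).const_mul _)
          fun t _ => mpDensity_le_inv_sqrt hy t
    _ = √√y / (π * y) * (2 * (√(x - (1 - √y) ^ 2 + θ) - √(x - (1 - √y) ^ 2))) := by
        rw [intervalIntegral.integral_const_mul, integral_inv_sqrt_sub, add_sub_right_comm]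
    _ ≤ √√y / (π * y) * (2 * √θ) := by
        gcongr
        exact sqrt_add_sub_sqrt_le _ hθ

lemma integral_mpDensity_le_of_lt (hy0 : 0 < y) (hy1 : y ≤ 1) (x : ℝ) {θ : ℝ}
    (hθ : (1 - √y) ^ 2 < θ) :
    ∫ t in x..x + θ, mpDensity y t ≤ 2 * θ / (y * (√((1 - √y) ^ 2) + √θ)) := by
  have hθ0 : 0 < θ := (sq_nonneg _).trans_lt hθ
  refine (integral_mpDensity_le_sqrt hy0.le x hθ0.le).trans ?_
  rw [div_mul_eq_mul_div, div_le_div_iff₀ (by positivity) (by positivity)]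
  have hc : √√y ≤ 1 := sqrt_le_one.2 (sqrt_le_one.2 hy1)
  have hsqrt : √((1 - √y) ^ 2) ≤ √θ := sqrt_le_sqrt hθ.le
  calc √√y * (2 * √θ) * (y * (√((1 - √y) ^ 2) + √θ))
      ≤ 1 * (2 * √θ) * (y * (√θ + √θ)) := by gcongr
    _ = 4 * (√θ * √θ) * y := by ring
    _ ≤ 2 * θ * (π * y) := by
        rw [mul_self_sqrt hθ0.le]
        nlinarith [mul_pos hθ0 hy0, pi_gt_three]

lemma integral_mpDensity_le_of_le (hy0 : 0 < y) (hy1 : y ≤ 1) (x : ℝ) {θ : ℝ} (hθ0 : 0 < θ)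
    (hθ : θ ≤ (1 - √y) ^ 2) :
    ∫ t in x..x + θ, mpDensity y t ≤ 2 * θ / (y * (√((1 - √y) ^ 2) + √θ)) := by
  have ha : 0 < √((1 - √y) ^ 2) := sqrt_pos.2 (hθ0.trans_le hθ)
  refine (integral_mpDensity_le_of_pos hy0.le (hθ0.trans_le hθ) x hθ0.le).trans ?_
  have hc : √√y ≤ 1 := sqrt_le_one.2 (sqrt_le_one.2 hy1)
  have hsqrt : √θ ≤ √((1 - √y) ^ 2) := sqrt_le_sqrt hθ
  rw [← div_eq_mul_inv, div_div, ← mul_div_assoc,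
    div_le_div_iff₀ (by positivity) (by positivity)]
  calc θ * √√y * (y * (√((1 - √y) ^ 2) + √θ))
      ≤ θ * 1 * (y * (√((1 - √y) ^ 2) + √((1 - √y) ^ 2))) := by gcongr
    _ = 2 * θ * (y * √((1 - √y) ^ 2)) := by ring
    _ ≤ 2 * θ * (π * y * (2 * √((1 - √y) ^ 2))) := by
        have : 0 < 2 * θ * (y * √((1 - √y) ^ 2)) := by positivity
        nlinarith [pi_gt_three]

end MarchenkoPastur

/-- Modulus of continuity for the Marčenko–Pastur law `F_y` with `0 < y ≤ 1`
and `a = (1-√y)²`: `sup_x |F_y(x+θ) - F_y(x)| ≤ 2θ/(y(√a + √θ))` for `θ > 0`. -/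
theorem mp_cdf_modulus_of_continuity (y : ℝ) (hy0 : 0 < y) (hy1 : y ≤ 1)
    (θ : ℝ) (hθ : 0 < θ) :
    ∀ x : ℝ, |mpCdf y (x + θ) - mpCdf y x| ≤
      2 * θ / (y * (Real.sqrt ((1 - Real.sqrt y) ^ 2) + Real.sqrt θ)) := by
  intro x
  rw [mpCdf_sub_mpCdf hy0.le, abs_of_nonneg (intervalIntegral.integral_nonneg (by linarith)
    fun t _ => mpDensity_nonneg hy0.le t)]
  rcases lt_or_ge ((1 - √y) ^ 2) θ with hθa | hθa
  · exact integral_mpDensity_le_of_lt hy0 hy1 x hθa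
  · exact integral_mpDensity_le_of_le hy0 hy1 x hθ hθa
end
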